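/- Scoring play games form a non-trivial monoid under the sequential join: the game i = {{0|0|0}|0|{0|0|0}} satisfies i ▷ G ≈ G ▷ i ≈ G for all scoring games G (so the identity set has more than one element), and the game Y = {{c|b|.}|a|.} with a ≠ 0 appropriately chosen is not invertible: there is no game Y⁻¹ with Y ▷ Y⁻¹ ▷ G ≈ G for all G. -/

import Mathlib

inductive SGame : Type where
  | mk (score : ℝ) (L R : List SGame)

namespace SGame

def score : SGame → ℝ | .mk s _ _ => s
def L : SGame → List SGame | .mk _ l _ => l
def R : SGame → List SGame | .mk _ _ r => r

mutual
  noncomputable def leftScore : SGame → ℝ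
    | .mk s l _ => WithBot.unbotD s ((l.attach.map fun x => rightScore x.1).maximum)
  termination_by g => sizeOf g
  decreasing_by
    have := List.sizeOf_lt_of_mem x.2
    simp only [SGame.mk.sizeOf_spec]
    omega
  noncomputable def rightScore : SGame → ℝ
    | .mk s _ r => WithTop.untopD s ((r.attach.map fun x => leftScore x.1).minimum)
  termination_by g => sizeOf g
  decreasing_by
    have := List.sizeOf_lt_of_mem x.2
    simp only [SGame.mk.sizeOf_spec]
    omega
end

/-- Conjunctive sum: move in all components simultaneously. -/
def conj : SGame → SGame → SGame
  | .mk s l r, .mk t l' r' =>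
    .mk (s + t)
      (l.attach.flatMap fun x => l'.attach.map fun y => conj x.1 y.1)
      (r.attach.flatMap fun x => r'.attach.map fun y => conj x.1 y.1)
termination_by G H => sizeOf G + sizeOf H
decreasing_by
  all_goals
    have h1 := List.sizeOf_lt_of_mem x.2
    have h2 := List.sizeOf_lt_of_mem y.2
    simp only [SGame.mk.sizeOf_spec]
    omega

/-- Selective sum: move in any nonempty subset of the components. -/
def sel : SGame → SGame → SGame
  | .mk s l r, .mk t l' r' =>
    .mk (s + t)
      ((l.attach.map fun x => sel x.1 (.mk t l' r')) ++
       (l'.attach.map fun y => sel (.mk s l r) y.1) ++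
       (l.attach.flatMap fun x => l'.attach.map fun y => sel x.1 y.1))
      ((r.attach.map fun x => sel x.1 (.mk t l' r')) ++
       (r'.attach.map fun y => sel (.mk s l r) y.1) ++
       (r.attach.flatMap fun x => r'.attach.map fun y => sel x.1 y.1))
termination_by G H => sizeOf G + sizeOf H
decreasing_by
  all_goals first
  | (have h1 := List.sizeOf_lt_of_mem x.2
     have h2 := List.sizeOf_lt_of_mem y.2
     simp only [SGame.mk.sizeOf_spec]; omega)
  | (have h1 := List.sizeOf_lt_of_mem x.2
     simp only [SGame.mk.sizeOf_spec]; omega)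
  | (have h2 := List.sizeOf_lt_of_mem y.2
     simp only [SGame.mk.sizeOf_spec]; omega)

/-- Add `a` points (for Left) to every score of the game. -/
def addScore (a : ℝ) : SGame → SGame
  | .mk s l r => .mk (a + s) (l.attach.map fun x => addScore a x.1)
      (r.attach.map fun x => addScore a x.1)
termination_by g => sizeOf g
decreasing_by
  all_goals
    have := List.sizeOf_lt_of_mem x.2
    simp only [SGame.mk.sizeOf_spec]; omega

/-- The negative of a game: swap the roles of Left and Right and negate all scores. -/
def neg : SGame → SGame
  | .mk s l r => .mk (-s) (r.attach.map fun x => neg x.1) (l.attach.map fun x => neg x.1)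
termination_by g => sizeOf g
decreasing_by
  all_goals
    have := List.sizeOf_lt_of_mem x.2
    simp only [SGame.mk.sizeOf_spec]; omega

/-- Impartial scoring game. -/
def Impartial : SGame → Prop
  | .mk s l r =>
    (l = [] ↔ r = []) ∧
    (∀ x ∈ l, ∃ y ∈ r, addScore (-s) x = neg (addScore (-s) y)) ∧
    (∀ x ∈ l.attach, Impartial x.1) ∧ (∀ y ∈ r.attach, Impartial y.1)
termination_by g => sizeOf g
decreasing_by
  all_goals
    first
    | (have := List.sizeOf_lt_of_mem x.2
       simp only [SGame.mk.sizeOf_spec]; omega)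
    | (have := List.sizeOf_lt_of_mem y.2
       simp only [SGame.mk.sizeOf_spec]; omega)

/-- Sequential join: play all of `G` first, then continue in `H`
    with the accumulated score. -/
def seq : SGame → SGame → SGame
  | .mk s [] [], H => addScore s H
  | .mk s l r, H =>
    .mk (s + H.score) (l.attach.map fun x => seq x.1 H)
      (r.attach.map fun x => seq x.1 H)
termination_by G _ => sizeOf G
decreasing_by
  all_goals
    have := List.sizeOf_lt_of_mem x.2
    simp only [SGame.mk.sizeOf_spec]; omega

/-- Outcome classes for scoring games. -/
inductive Outcome : Type where
  | L | R | N | P | Tie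
deriving DecidableEq

open Classical in
/-- The outcome class of a scoring game, determined by the signs of the
    optimal final scores with Left, resp. Right, moving first. -/
noncomputable def outcome (G : SGame) : Outcome :=
  if 0 < leftScore G ∧ rightScore G < 0 then .N
  else if leftScore G < 0 ∧ 0 < rightScore G then .P
  else if leftScore G = 0 ∧ rightScore G = 0 then .Tie
  else if 0 ≤ leftScore G ∧ 0 ≤ rightScore G then .L
  else .R

end SGame

namespace SGame

/-- Equivalence of scoring games in all sequential-join contexts:
same outcome whichever side of a sequential join the games appear on. -/
def SeqEquiv (A B : SGame) : Prop :=
  ∀ X : SGame, outcome (seq A X) = outcome (seq B X) ∧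
    outcome (seq X A) = outcome (seq X B)

end SGame

/-!
The final scores of `X ▷ H` depend on `H` only through its root score and its two final scores
(`SameScores`). The game `i ▷ H` has the same three scores as `H`, since each of the two moves in
`i` is met by the forced reply; as `G ▷ {.|0|.} = G`, the game `i` itself then has the scores of
`{.|0|.}`, and associativity of `▷` makes `i` a two-sided identity up to outcomes.

Right has no move in `Y ▷ Y⁻¹`, so with Right moving first `Y ▷ Y⁻¹ ▷ G` stops at once, at the
root score of `G` shifted by a constant. Two Ties with different root scores cannot both keep
this final score equal to `0`.
-/

namespace List

variable {α β : Type*} [LinearOrder α] [LinearOrder β] {f : α → β}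

theorem maximum_map_of_monotone (hf : Monotone f) (l : List α) :
    (l.map f).maximum = l.maximum.map f := by
  induction l with
  | nil => rfl
  | cons x l ih =>
    rw [map_cons, maximum_cons, maximum_cons, ih]
    cases l.maximum with
    | bot => simp
    | coe m =>
      rw [WithBot.map_coe, ← WithBot.coe_max, ← WithBot.coe_max, WithBot.map_coe, hf.map_max]

theorem minimum_map_of_monotone (hf : Monotone f) (l : List α) :
    (l.map f).minimum = l.minimum.map f := by
  induction l with
  | nil => rfl
  | cons x l ih =>
    rw [map_cons, minimum_cons, minimum_cons, ih]
    cases l.minimum with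
    | top => simp
    | coe m =>
      rw [WithTop.map_coe, ← WithTop.coe_min, ← WithTop.coe_min, WithTop.map_coe, hf.map_min]

end List

namespace SGame

@[elab_as_elim]
theorem induction {P : SGame → Prop}
    (mk : ∀ s l r, (∀ x ∈ l, P x) → (∀ x ∈ r, P x) → P (mk s l r)) : ∀ G, P G
  | .mk s l r => mk s l r (fun x _ => induction mk x) (fun x _ => induction mk x)
termination_by G => sizeOf G
decreasing_by
  all_goals
    have := List.sizeOf_lt_of_mem ‹_›
    simp only [SGame.mk.sizeOf_spec]; omega

theorem leftScore_mk (s : ℝ) (l r : List SGame) :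
    leftScore (mk s l r) = WithBot.unbotD s ((l.map rightScore).maximum) := by
  rw [leftScore, List.attach_map_val]

theorem rightScore_mk (s : ℝ) (l r : List SGame) :
    rightScore (mk s l r) = WithTop.untopD s ((r.map leftScore).minimum) := by
  rw [rightScore, List.attach_map_val]

@[simp]
theorem leftScore_mk_nil (s : ℝ) (r : List SGame) : leftScore (mk s [] r) = s := by
  rw [leftScore_mk]; rfl

@[simp]
theorem rightScore_mk_nil (s : ℝ) (l : List SGame) : rightScore (mk s l []) = s := by
  rw [rightScore_mk]; rfl

theorem addScore_mk (a s : ℝ) (l r : List SGame) :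
    addScore a (mk s l r) = mk (a + s) (l.map (addScore a)) (r.map (addScore a)) := by
  rw [addScore, List.attach_map_val, List.attach_map_val]

theorem seq_mk_nil_nil (s : ℝ) (H : SGame) : seq (mk s [] []) H = addScore s H := by
  rw [seq]

theorem seq_mk {l r : List SGame} (h : l ≠ [] ∨ r ≠ []) (s : ℝ) (H : SGame) :
    seq (mk s l r) H = mk (s + H.score) (l.map (seq · H)) (r.map (seq · H)) := by
  rw [seq, List.attach_map_val (f := (seq · H)), List.attach_map_val (f := (seq · H))]
  tauto

@[simp]
theorem score_mk (s : ℝ) (l r : List SGame) : score (mk s l r) = s := rfl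

theorem score_addScore (a : ℝ) (G : SGame) : (addScore a G).score = a + G.score := by
  cases G with | mk s l r => rw [addScore_mk]; rfl

theorem score_seq (G H : SGame) : (seq G H).score = G.score + H.score := by
  cases G with
  | mk s l r =>
    by_cases h : l ≠ [] ∨ r ≠ []
    · rw [seq_mk h]; rfl
    · obtain ⟨rfl, rfl⟩ : l = [] ∧ r = [] := by tauto
      rw [seq_mk_nil_nil, score_addScore]; rfl

theorem scores_addScore (a : ℝ) (G : SGame) :
    (addScore a G).leftScore = a + G.leftScore ∧
      (addScore a G).rightScore = a + G.rightScore := by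
  induction G using induction with
  | mk s l r ihl ihr =>
    have hl : l.map (rightScore ∘ addScore a) = (l.map rightScore).map (a + ·) := by
      rw [List.map_map]; exact List.map_congr_left fun x hx => (ihl x hx).2
    have hr : r.map (leftScore ∘ addScore a) = (r.map leftScore).map (a + ·) := by
      rw [List.map_map]; exact List.map_congr_left fun x hx => (ihr x hx).1
    rw [addScore_mk, leftScore_mk, leftScore_mk, rightScore_mk, rightScore_mk, List.map_map,
      List.map_map, hl, hr, List.maximum_map_of_monotone (add_right_mono (a := a)),
      List.minimum_map_of_monotone add_right_mono]
    constructor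
    · cases (l.map rightScore).maximum <;> rfl
    · cases (r.map leftScore).minimum <;> rfl

theorem addScore_zero (G : SGame) : addScore 0 G = G := by
  induction G using induction with
  | mk s l r ihl ihr =>
    rw [addScore_mk, zero_add, List.map_congr_left ihl, List.map_congr_left ihr, List.map_id',
      List.map_id']

theorem addScore_addScore (a b : ℝ) (G : SGame) :
    addScore a (addScore b G) = addScore (a + b) G := by
  induction G using induction with
  | mk s l r ihl ihr =>
    rw [addScore_mk, addScore_mk, addScore_mk, List.map_map, List.map_map, add_assoc]
    congr 1
    · exact List.map_congr_left ihl
    · exact List.map_congr_left ihr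

theorem seq_addScore (a : ℝ) (G H : SGame) : seq (addScore a G) H = addScore a (seq G H) := by
  induction G using induction with
  | mk s l r ihl ihr =>
    by_cases h : l ≠ [] ∨ r ≠ []
    · have h' : l.map (addScore a) ≠ [] ∨ r.map (addScore a) ≠ [] := by simpa using h
      rw [addScore_mk, seq_mk h', seq_mk h, addScore_mk, List.map_map, List.map_map, List.map_map,
        List.map_map, add_assoc]
      congr 1
      · exact List.map_congr_left ihl
      · exact List.map_congr_left ihr
    · obtain ⟨rfl, rfl⟩ : l = [] ∧ r = [] := by tauto
      rw [addScore_mk, List.map_nil, seq_mk_nil_nil, seq_mk_nil_nil, addScore_addScore]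

theorem seq_assoc (A B C : SGame) : seq (seq A B) C = seq A (seq B C) := by
  induction A using induction with
  | mk s l r ihl ihr =>
    by_cases h : l ≠ [] ∨ r ≠ []
    · have h' : l.map (seq · B) ≠ [] ∨ r.map (seq · B) ≠ [] := by simpa using h
      rw [seq_mk h, seq_mk h', seq_mk h, List.map_map, List.map_map, score_seq, add_assoc]
      congr 1
      · exact List.map_congr_left ihl
      · exact List.map_congr_left ihr
    · obtain ⟨rfl, rfl⟩ : l = [] ∧ r = [] := by tauto
      rw [seq_mk_nil_nil, seq_mk_nil_nil, seq_addScore]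

@[simp]
theorem seq_zero (G : SGame) : seq G (mk 0 [] []) = G := by
  induction G using induction with
  | mk s l r ihl ihr =>
    by_cases h : l ≠ [] ∨ r ≠ []
    · rw [seq_mk h, score_mk, add_zero, List.map_congr_left ihl, List.map_congr_left ihr,
        List.map_id', List.map_id']
    · obtain ⟨rfl, rfl⟩ : l = [] ∧ r = [] := by tauto
      rw [seq_mk_nil_nil, addScore_mk, add_zero, List.map_nil]

structure SameScores (A B : SGame) : Prop where
  score_eq : A.score = B.score
  leftScore_eq : A.leftScore = B.leftScore
  rightScore_eq : A.rightScore = B.rightScore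

namespace SameScores

variable {A B : SGame}

theorem outcome_eq (h : SameScores A B) : outcome A = outcome B := by
  unfold outcome
  rw [h.leftScore_eq, h.rightScore_eq]

theorem addScore (h : SameScores A B) (a : ℝ) : SameScores (addScore a A) (addScore a B) where
  score_eq := by rw [score_addScore, score_addScore, h.score_eq]
  leftScore_eq := by rw [(scores_addScore a A).1, (scores_addScore a B).1, h.leftScore_eq]
  rightScore_eq := by rw [(scores_addScore a A).2, (scores_addScore a B).2, h.rightScore_eq]

theorem seq_right (h : SameScores A B) (X : SGame) : SameScores (seq X A) (seq X B) := by
  induction X using induction with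
  | mk s l r ihl ihr =>
    by_cases hlr : l ≠ [] ∨ r ≠ []
    · rw [seq_mk hlr, seq_mk hlr, h.score_eq]
      refine ⟨rfl, ?_, ?_⟩
      · rw [leftScore_mk, leftScore_mk, List.map_map, List.map_map]
        congr 2
        exact List.map_congr_left fun x hx => (ihl x hx).rightScore_eq
      · rw [rightScore_mk, rightScore_mk, List.map_map, List.map_map]
        congr 2
        exact List.map_congr_left fun x hx => (ihr x hx).leftScore_eq
    · obtain ⟨rfl, rfl⟩ : l = [] ∧ r = [] := by tauto
      rw [seq_mk_nil_nil, seq_mk_nil_nil]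
      exact h.addScore s

end SameScores

theorem SeqEquiv.outcome_eq {A B : SGame} (h : SeqEquiv A B) : outcome A = outcome B := by
  simpa only [seq_zero] using (h (mk 0 [] [])).1

theorem seqEquiv_of_sameScores_seq {E : SGame} (hE : ∀ H, SameScores (seq E H) H) (G : SGame) :
    SeqEquiv (seq E G) G ∧ SeqEquiv (seq G E) G := by
  have hE₀ : SameScores E (mk 0 [] []) := by simpa only [seq_zero] using hE (mk 0 [] [])
  refine ⟨fun X => ⟨?_, ?_⟩, fun X => ⟨?_, ?_⟩⟩
  · rw [seq_assoc]
    exact (hE _).outcome_eq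
  · exact ((hE G).seq_right X).outcome_eq
  · rw [seq_assoc]
    exact ((hE X).seq_right G).outcome_eq
  · simpa only [seq_zero] using ((hE₀.seq_right G).seq_right X).outcome_eq

theorem sameScores_seq_i (H : SGame) :
    SameScores
      (seq (mk 0 [mk 0 [mk 0 [] []] [mk 0 [] []]] [mk 0 [mk 0 [] []] [mk 0 [] []]]) H) H := by
  have hA : seq (mk 0 [mk 0 [] []] [mk 0 [] []]) H = mk H.score [H] [H] := by
    rw [seq_mk (by simp), List.map_singleton, seq_mk_nil_nil, addScore_zero, zero_add]
  rw [seq_mk (by simp), List.map_singleton, hA, zero_add]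
  refine ⟨rfl, ?_, ?_⟩ <;> simp [leftScore_mk, rightScore_mk]

theorem outcome_eq_tie_iff {W : SGame} :
    outcome W = .Tie ↔ W.leftScore = 0 ∧ W.rightScore = 0 := by
  unfold outcome
  split_ifs <;> grind

theorem rightScore_seq_mk_nil {s : ℝ} {l : List SGame} (hl : l ≠ []) (H : SGame) :
    rightScore (seq (mk s l []) H) = s + H.score := by
  rw [seq_mk (.inl hl), List.map_nil, rightScore_mk_nil]

theorem not_forall_seqEquiv_seq_mk_nil {s : ℝ} {l : List SGame} (hl : l ≠ []) :
    ¬ ∀ G, SeqEquiv (seq (mk s l []) G) G := by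
  intro h
  have tie : ∀ T, outcome T = .Tie → s + T.score = 0 := fun T hT => by
    rw [← rightScore_seq_mk_nil hl]
    exact (outcome_eq_tie_iff.1 ((h T).outcome_eq.trans hT)).2
  have h₀ := tie (mk 0 [] []) (outcome_eq_tie_iff.2 (by simp))
  have h₁ := tie (mk 1 [mk 0 [] []] [mk 0 [] []])
    (outcome_eq_tie_iff.2 (by simp [leftScore_mk, rightScore_mk]))
  simp only [score_mk] at h₀ h₁
  linarith

/-- Scoring games form a non-trivial monoid under the sequential join:
`i = {{0|0|0}|0|{0|0|0}}` is an identity (so the identity set has more than one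
element), while the game `Y = {{c|b|.}|a|.}` (for suitable `a ≠ 0`) has no inverse. -/
theorem seq_nontrivial_monoid :
    (∀ G : SGame,
      let i : SGame := .mk 0 [.mk 0 [.mk 0 [] []] [.mk 0 [] []]]
                            [.mk 0 [.mk 0 [] []] [.mk 0 [] []]]
      SeqEquiv (seq i G) G ∧ SeqEquiv (seq G i) G) ∧
    (∃ a b c : ℝ, a ≠ 0 ∧
      ¬ ∃ Yinv : SGame, ∀ G : SGame,
        SeqEquiv (seq (seq (SGame.mk a [SGame.mk b [SGame.mk c [] []] []] []) Yinv) G) G) := by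
  refine ⟨seqEquiv_of_sameScores_seq sameScores_seq_i, 1, 0, 0, one_ne_zero, ?_⟩
  rintro ⟨Yinv, hY⟩
  rw [seq_mk (by simp)] at hY
  exact not_forall_seqEquiv_seq_mk_nil (by simp) hY

end SGame
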